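/- Let F be a Finsler metric on an open set U ⊆ ℝⁿ, let f : U → ℝ be C^∞ with df_x ≠ 0 for all x ∈ U, and let G : U → ℝⁿ be the C^∞ gradient vector field of f with respect to F, i.e., G(x) ≠ 0 and g^x_{G(x)}(G(x), u) = df_x(u) for all u ∈ ℝⁿ and x ∈ U. Let Γ be the Chern connection associated with G, with covariant derivative ∇_X Y := DY[X] + Γ(X,Y). Then for all C^∞ vector fields X, Y on U and all x ∈ U, the Finsler Hessian Hess^F f(Y,X) := g^x_{G(x)}((∇_Y G)(x), X(x)) satisfies Hess^F f(Y,X)(x) = Y(X(f))(x) − df_x((∇_Y X)(x)), where Y(X(f)) denotes the derivative of the function X(f) = df(X) in the direction Y. -/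

import Mathlib

/-- The fundamental tensor of a Finsler metric `F` at base point `x` and direction `v`,
evaluated on `(u, w)`: one half of the second Fréchet (vertical) derivative of
`v ↦ F(x,v)²` at `v`. -/
noncomputable def gF {n : ℕ} (F : (Fin n → ℝ) → (Fin n → ℝ) → ℝ)
    (x v u w : Fin n → ℝ) : ℝ :=
  (1 / 2) * iteratedFDeriv ℝ 2 (fun y => F x y ^ 2) v ![u, w]

/-- The Cartan tensor of a Finsler metric `F` at base point `x` and direction `v`:
one quarter of the third Fréchet (vertical) derivative of `v ↦ F(x,v)²` at `v`. -/
noncomputable def cartanF {n : ℕ} (F : (Fin n → ℝ) → (Fin n → ℝ) → ℝ)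
    (x v w₁ w₂ w₃ : Fin n → ℝ) : ℝ :=
  (1 / 4) * iteratedFDeriv ℝ 3 (fun y => F x y ^ 2) v ![w₁, w₂, w₃]

/-- `F` is a Finsler metric on the set `U ⊆ ℝⁿ`. -/
structure IsFinslerMetric {n : ℕ} (U : Set (Fin n → ℝ))
    (F : (Fin n → ℝ) → (Fin n → ℝ) → ℝ) : Prop where
  smooth : ContDiffOn ℝ (⊤ : ℕ∞) (fun p : (Fin n → ℝ) × (Fin n → ℝ) => F p.1 p.2)
    (U ×ˢ {(0 : Fin n → ℝ)}ᶜ)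
  homog : ∀ x ∈ U, ∀ c : ℝ, 0 < c → ∀ v : Fin n → ℝ, F x (c • v) = c * F x v
  pos : ∀ x ∈ U, ∀ v : Fin n → ℝ, v ≠ 0 → 0 < F x v
  posdef : ∀ x ∈ U, ∀ v : Fin n → ℝ, v ≠ 0 → ∀ u : Fin n → ℝ, u ≠ 0 → 0 < gF F x v u u

/-- `Γ` is the Chern connection of the Finsler metric `F` on `U` associated with the
nonvanishing reference vector field `V`: a smooth field of symmetric bilinear maps such
that the covariant derivative `∇^V_X Y = DY[X] + Γ(X,Y)` is almost `g`-compatible. -/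
def IsChernConnection {n : ℕ} (U : Set (Fin n → ℝ))
    (F : (Fin n → ℝ) → (Fin n → ℝ) → ℝ) (V : (Fin n → ℝ) → (Fin n → ℝ))
    (Γ : (Fin n → ℝ) → (Fin n → ℝ) →ₗ[ℝ] (Fin n → ℝ) →ₗ[ℝ] (Fin n → ℝ)) : Prop :=
  (∀ x ∈ U, ∀ u w : Fin n → ℝ, Γ x u w = Γ x w u) ∧
  (∀ u w : Fin n → ℝ, ContDiffOn ℝ (⊤ : ℕ∞) (fun x => Γ x u w) U) ∧
  (∀ X Y Z : (Fin n → ℝ) → (Fin n → ℝ),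
    ContDiffOn ℝ (⊤ : ℕ∞) X U → ContDiffOn ℝ (⊤ : ℕ∞) Y U → ContDiffOn ℝ (⊤ : ℕ∞) Z U →
    ∀ x ∈ U,
      fderiv ℝ (fun y => gF F y (V y) (Y y) (Z y)) x (X x) =
        gF F x (V x) (fderiv ℝ Y x (X x) + Γ x (X x) (Y x)) (Z x) +
        gF F x (V x) (Y x) (fderiv ℝ Z x (X x) + Γ x (X x) (Z x)) +
        2 * cartanF F x (V x) (fderiv ℝ V x (X x) + Γ x (X x) (V x)) (Y x) (Z x))



section Aux

variable {E' F' G' : Type*} [NormedAddCommGroup E'] [NormedSpace ℝ E']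
  [NormedAddCommGroup F'] [NormedSpace ℝ F'] [NormedAddCommGroup G'] [NormedSpace ℝ G']

/-- Derivative of the evaluation of a CLM-valued map at a constant vector. -/
lemma fderiv_eval_const {k : E' → F' →L[ℝ] G'} {y : E'} (hk : DifferentiableAt ℝ k y)
    (b : F') (u : E') :
    fderiv ℝ (fun z => k z b) y u = fderiv ℝ k y u b := by
  have : fderiv ℝ (fun z => (k z) ((fun _ : E' => b) z)) y =
      (k y).comp (fderiv ℝ (fun _ : E' => b) y) + (fderiv ℝ k y).flip b :=
    fderiv_clm_apply hk (differentiableAt_const b)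
  simpa using congrArg (fun L => L u) this

end Aux

section Cartan

variable {n : ℕ}

/-- The Cartan tensor vanishes when the middle argument equals the reference direction. -/
lemma cartan_middle_vanish {U : Set (Fin n → ℝ)}
    {F : (Fin n → ℝ) → (Fin n → ℝ) → ℝ} (hF : IsFinslerMetric U F)
    {x : Fin n → ℝ} (hx : x ∈ U) {v : Fin n → ℝ} (hv : v ≠ 0) (a c : Fin n → ℝ) :
    cartanF F x v a v c = 0 := by
  set h : (Fin n → ℝ) → ℝ := fun y => F x y ^ 2 with hh_def
  -- smoothness of h away from 0
  have hsm : ContDiffOn ℝ (⊤ : ℕ∞) h {(0 : Fin n → ℝ)}ᶜ := by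
    have h1 : ContDiffOn ℝ (⊤ : ℕ∞) (fun y : Fin n → ℝ => F x y) {(0 : Fin n → ℝ)}ᶜ := by
      have hmap : Set.MapsTo (fun y : Fin n → ℝ => ((x, y) : (Fin n → ℝ) × (Fin n → ℝ)))
          {(0 : Fin n → ℝ)}ᶜ (U ×ˢ {(0 : Fin n → ℝ)}ᶜ) := fun y hy => Set.mem_prod.mpr ⟨hx, hy⟩
      exact hF.smooth.comp ((contDiff_const.prodMk contDiff_id).contDiffOn) hmap
    exact h1.pow 2
  have hAt : ∀ {y : Fin n → ℝ}, y ≠ 0 → ContDiffAt ℝ (⊤ : ℕ∞) h y := fun {y} hy =>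
    hsm.contDiffAt (IsOpen.mem_nhds isOpen_compl_singleton hy)
  have hD0 : ∀ {y : Fin n → ℝ}, y ≠ 0 → DifferentiableAt ℝ h y := fun {y} hy =>
    (hAt hy).differentiableAt (by simp)
  have hD1c : ∀ {y : Fin n → ℝ}, y ≠ 0 → ContDiffAt ℝ (⊤ : ℕ∞) (fderiv ℝ h) y := fun {y} hy =>
    (hAt hy).fderiv_right (by simp)
  have hD2c : ∀ {y : Fin n → ℝ}, y ≠ 0 → ContDiffAt ℝ (⊤ : ℕ∞) (fderiv ℝ (fderiv ℝ h)) y :=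
    fun {y} hy => (hD1c hy).fderiv_right (by simp)
  -- homogeneity of h
  have hhom : ∀ c : ℝ, 0 < c → ∀ y : Fin n → ℝ, h (c • y) = c ^ 2 * h y := by
    intro c hc y
    simp only [hh_def, hF.homog x hx c hc y]
    ring
  -- first derivative is 1-homogeneous
  have H1 : ∀ c : ℝ, 0 < c → ∀ y : Fin n → ℝ, y ≠ 0 → ∀ u : Fin n → ℝ,
      fderiv ℝ h (c • y) u = c * fderiv ℝ h y u := by
    intro c hc y hy u
    have hcy : c • y ≠ 0 := smul_ne_zero hc.ne' hy
    have hL : HasFDerivAt (fun z : Fin n → ℝ => c • z)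
        (c • ContinuousLinearMap.id ℝ (Fin n → ℝ)) y := (hasFDerivAt_id y).const_smul c
    have hcomp : HasFDerivAt (fun z => h (c • z))
        ((fderiv ℝ h (c • y)).comp (c • ContinuousLinearMap.id ℝ (Fin n → ℝ))) y :=
      (hD0 hcy).hasFDerivAt.comp y hL
    have e1 : fderiv ℝ (fun z => h (c • z)) y u = c * fderiv ℝ h (c • y) u := by
      rw [hcomp.fderiv]
      simp [mul_comm]
    have e2 : (fun z : Fin n → ℝ => h (c • z)) = fun z => c ^ 2 * h z := funext (hhom c hc)
    have e3 : fderiv ℝ (fun z => h (c • z)) y u = c ^ 2 * fderiv ℝ h y u := by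
      rw [e2, fderiv_const_mul (hD0 hy) (c ^ 2)]
      simp
    apply mul_left_cancel₀ hc.ne'
    rw [← e1, e3]
    ring
  -- the function ρ
  set ρ : (Fin n → ℝ) → ℝ := fun y => fderiv ℝ h y c with hρ_def
  have hρc : ∀ {y : Fin n → ℝ}, y ≠ 0 → ContDiffAt ℝ (⊤ : ℕ∞) ρ y := fun {y} hy =>
    (hD1c hy).clm_apply contDiffAt_const
  have hρd : ∀ {y : Fin n → ℝ}, y ≠ 0 → DifferentiableAt ℝ ρ y := fun {y} hy =>
    (hρc hy).differentiableAt (by simp)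
  -- second derivative is 0-homogeneous
  have H2 : ∀ c' : ℝ, 0 < c' → ∀ y : Fin n → ℝ, y ≠ 0 → ∀ u : Fin n → ℝ,
      fderiv ℝ ρ (c' • y) u = fderiv ℝ ρ y u := by
    intro c' hc' y hy u
    have hcy : c' • y ≠ 0 := smul_ne_zero hc'.ne' hy
    have hev : (fun z => ρ (c' • z)) =ᶠ[nhds y] fun z => c' * ρ z := by
      filter_upwards [IsOpen.mem_nhds isOpen_compl_singleton hy] with z hz
      exact H1 c' hc' z hz c
    have hL : HasFDerivAt (fun z : Fin n → ℝ => c' • z)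
        (c' • ContinuousLinearMap.id ℝ (Fin n → ℝ)) y := (hasFDerivAt_id y).const_smul c'
    have hcomp : HasFDerivAt (fun z => ρ (c' • z))
        ((fderiv ℝ ρ (c' • y)).comp (c' • ContinuousLinearMap.id ℝ (Fin n → ℝ))) y :=
      (hρd hcy).hasFDerivAt.comp y hL
    have e1 : fderiv ℝ (fun z => ρ (c' • z)) y u = c' * fderiv ℝ ρ (c' • y) u := by
      rw [hcomp.fderiv]
      simp [mul_comm]
    have e3 : fderiv ℝ (fun z => ρ (c' • z)) y u = c' * fderiv ℝ ρ y u := by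
      rw [hev.fderiv_eq, fderiv_const_mul (hρd hy) c']
      simp
    have := e1.symm.trans e3
    exact mul_left_cancel₀ hc'.ne' this
  -- the function σ
  set σ : (Fin n → ℝ) → ℝ := fun y => fderiv ℝ ρ y a with hσ_def
  have hσc : ContDiffAt ℝ (⊤ : ℕ∞) σ v := ((hρc hv).fderiv_right (by simp)).clm_apply contDiffAt_const
  have hσd : DifferentiableAt ℝ σ v := hσc.differentiableAt (by simp)
  -- Euler: fderiv σ v v = 0
  have hEuler : fderiv ℝ σ v v = 0 := by
    have hφev : (fun t : ℝ => σ (t • v)) =ᶠ[nhds (1 : ℝ)] fun _ => σ v := by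
      filter_upwards [IsOpen.mem_nhds isOpen_Ioi (Set.mem_Ioi.mpr one_pos)] with t ht
      exact H2 t ht v hv a
    have hL : HasDerivAt (fun t : ℝ => t • v) v 1 := by
      simpa using (hasDerivAt_id (1 : ℝ)).smul_const v
    have hσ' : HasFDerivAt σ (fderiv ℝ σ v) v := hσd.hasFDerivAt
    have hσ'' : HasFDerivAt σ (fderiv ℝ σ v) ((1 : ℝ) • v) := by
      rw [one_smul]; exact hσ'
    have hφ : HasDerivAt (fun t : ℝ => σ (t • v)) (fderiv ℝ σ v v) 1 :=
      by have := hσ''.comp_hasDerivAt (1 : ℝ) hL; exact this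
    have : deriv (fun t : ℝ => σ (t • v)) 1 = 0 := by
      rw [hφev.deriv_eq]; simp
    rw [← hφ.deriv]
    exact this
  -- identify everything with the third derivative
  have hσev : σ =ᶠ[nhds v] fun z => fderiv ℝ (fderiv ℝ h) z a c := by
    filter_upwards [IsOpen.mem_nhds isOpen_compl_singleton hv] with z hz
    exact fderiv_eval_const ((hD1c hz).differentiableAt (by simp)) c a
  have hk1d : DifferentiableAt ℝ (fun z => fderiv ℝ (fderiv ℝ h) z a) v :=
    ((hD2c hv).differentiableAt (by simp)).clm_apply (differentiableAt_const a)
  have hEulerD3 : fderiv ℝ (fderiv ℝ (fderiv ℝ h)) v v a c = 0 := by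
    have e1 : fderiv ℝ σ v v = fderiv ℝ (fun z => fderiv ℝ (fderiv ℝ h) z a c) v v := by
      rw [hσev.fderiv_eq]
    have e2 : fderiv ℝ (fun z => (fun z => fderiv ℝ (fderiv ℝ h) z a) z c) v v =
        fderiv ℝ (fun z => fderiv ℝ (fderiv ℝ h) z a) v v c := fderiv_eval_const hk1d c v
    have e3 : fderiv ℝ (fun z => fderiv ℝ (fderiv ℝ h) z a) v v =
        fderiv ℝ (fderiv ℝ (fderiv ℝ h)) v v a :=
      fderiv_eval_const ((hD2c hv).differentiableAt (by simp)) a v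
    calc fderiv ℝ (fderiv ℝ (fderiv ℝ h)) v v a c
        = fderiv ℝ (fun z => fderiv ℝ (fderiv ℝ h) z a) v v c := by rw [e3]
      _ = fderiv ℝ (fun z => fderiv ℝ (fderiv ℝ h) z a c) v v := e2.symm
      _ = fderiv ℝ σ v v := e1.symm
      _ = 0 := hEuler
  -- symmetry of the first two slots
  have hsym : fderiv ℝ (fderiv ℝ (fderiv ℝ h)) v a v =
      fderiv ℝ (fderiv ℝ (fderiv ℝ h)) v v a :=
    ((hD1c hv).isSymmSndFDerivAt (by rw [minSmoothness_of_isRCLikeNormedField]; exact WithTop.coe_le_coe.mpr (le_top : (2 : ℕ∞) ≤ ⊤))) a v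
  -- conclude
  have hexp : cartanF F x v a v c =
      (1 / 4) * fderiv ℝ (fderiv ℝ (fderiv ℝ h)) v a v c := by
    unfold cartanF
    congr 1
    have e := iteratedFDeriv_succ_apply_right (𝕜 := ℝ) (f := h) (x := v) (n := 2) ![a, v, c]
    rw [iteratedFDeriv_two_apply] at e
    exact e
  rw [hexp, hsym, hEulerD3, mul_zero]

end Cartan

/-- Formula for the Finsler Hessian: if `G` is the `F`-gradient vector field of a
smooth function `f` without critical points on `U` and `Γ` is the Chern connection
associated with `G` (covariant derivative `∇_X Y = DY[X] + Γ(X,Y)`), then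
`Hess^F f(Y,X) = g_G(∇_Y G, X) = Y(X(f)) − df(∇_Y X)`. -/
theorem finsler_hessian_formula {n : ℕ} (U : Set (Fin n → ℝ)) (hU : IsOpen U)
    (F : (Fin n → ℝ) → (Fin n → ℝ) → ℝ) (hF : IsFinslerMetric U F)
    (f : (Fin n → ℝ) → ℝ) (hf : ContDiffOn ℝ (⊤ : ℕ∞) f U)
    (hdf : ∀ x ∈ U, fderiv ℝ f x ≠ 0)
    (G : (Fin n → ℝ) → (Fin n → ℝ)) (hG : ContDiffOn ℝ (⊤ : ℕ∞) G U)
    (hG0 : ∀ x ∈ U, G x ≠ 0)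
    (hgrad : ∀ x ∈ U, ∀ u : Fin n → ℝ, gF F x (G x) (G x) u = fderiv ℝ f x u)
    (Γ : (Fin n → ℝ) → (Fin n → ℝ) →ₗ[ℝ] (Fin n → ℝ) →ₗ[ℝ] (Fin n → ℝ))
    (hΓ : IsChernConnection U F G Γ)
    (X Y : (Fin n → ℝ) → (Fin n → ℝ))
    (hX : ContDiffOn ℝ (⊤ : ℕ∞) X U) (hY : ContDiffOn ℝ (⊤ : ℕ∞) Y U)
    (x : Fin n → ℝ) (hx : x ∈ U) :
    gF F x (G x) (fderiv ℝ G x (Y x) + Γ x (Y x) (G x)) (X x) =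
      fderiv ℝ (fun y => fderiv ℝ f y (X y)) x (Y x) -
        fderiv ℝ f x (fderiv ℝ X x (Y x) + Γ x (Y x) (X x)) := by
  classical
  have hcomp := hΓ.2.2 Y G X hY hG hX x hx
  have hLHS : fderiv ℝ (fun y => gF F y (G y) (G y) (X y)) x =
      fderiv ℝ (fun y => fderiv ℝ f y (X y)) x := by
    apply Filter.EventuallyEq.fderiv_eq
    filter_upwards [hU.mem_nhds hx] with y hy
    exact hgrad y hy (X y)
  have hmid : gF F x (G x) (G x) (fderiv ℝ X x (Y x) + Γ x (Y x) (X x)) =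
      fderiv ℝ f x (fderiv ℝ X x (Y x) + Γ x (Y x) (X x)) :=
    hgrad x hx _
  have hcart : cartanF F x (G x) (fderiv ℝ G x (Y x) + Γ x (Y x) (G x)) (G x) (X x) = 0 :=
    cartan_middle_vanish hF hx (hG0 x hx) _ _
  rw [hLHS, hcart, hmid] at hcomp
  linarith
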